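/- arXiv:2008.02489 — 5 statements merged into one kernel-verified Lean document; each statement's English description precedes it below -/
import Mathlib

section
/- Let Λ be a closed operator on a Banach space, let K be Λ-bounded with Λ-bound β* ≥ 0, and let S be a bounded operator mapping Dom(Λ) into itself such that ΛSx − SΛx = Kx for all x ∈ Dom(Λ). Then the restriction of S to Dom(Λ) is bounded with respect to the graph norm ‖x‖_Λ = ‖x‖ + ‖Λx‖, and its spectral radius with respect to the graph norm satisfies r_Λ(S) ≤ ‖S‖ + β*. -/
/-!
Weighting the graph norm as `‖J d‖ + w ‖Λ d‖` with `w = β / (α + β)` makes `S` a map of norm at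
most `‖S‖ + β`: the commutator relation gives `‖Λ S d‖ ≤ α ‖J d‖ + (‖S‖ + β) ‖Λ d‖`, and the
small weight absorbs the `α`-term into the `J`-part. The weighted norm is equivalent to the graph
norm, so `‖S^n‖_Λ ≤ C (‖S‖ + β)^n` with `C` independent of `n`, and Gelfand's formula gives
`r_Λ(S) ≤ ‖S‖ + β` for every `β > β*`.
-/

open Filter Topology
open scoped NNReal ENNReal

theorem spectralRadius_le_of_norm_pow_le {𝕜 A : Type*} [NontriviallyNormedField 𝕜] [NormedRing A]
    [NormedAlgebra 𝕜 A] [CompleteSpace A] {a : A} {C : ℝ} {t : ℝ≥0}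
    (h : ∀ n : ℕ, ‖a ^ n‖ ≤ C * t ^ n) : spectralRadius 𝕜 a ≤ t := by
  have hC : 0 < |C| + 1 := by positivity
  have hlim : Tendsto (fun n : ℕ => ENNReal.ofReal ((|C| + 1) ^ (1 / (n : ℝ)) * t))
      atTop (𝓝 t) := by
    have := ((Real.continuousAt_const_rpow hC.ne').tendsto.comp
      tendsto_one_div_atTop_nhds_zero_nat).mul_const (t : ℝ)
    simpa using ENNReal.tendsto_ofReal this
  refine (spectrum.spectralRadius_le_liminf_pow_nnnorm_pow_one_div 𝕜 a).trans ?_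
  rw [← hlim.liminf_eq]
  refine liminf_le_liminf (eventually_atTop.2 ⟨1, fun n hn => ?_⟩)
  have hn0 : (0 : ℝ) ≤ 1 / (n : ℝ) := by positivity
  have ha : ‖a ^ n‖ ≤ (|C| + 1) * t ^ n :=
    (h n).trans (by gcongr; linarith [le_abs_self C])
  rw [← ENNReal.ofReal_coe_nnreal, coe_nnnorm, ENNReal.ofReal_rpow_of_nonneg (norm_nonneg _) hn0]
  refine ENNReal.ofReal_le_ofReal ((Real.rpow_le_rpow (norm_nonneg _) ha hn0).trans_eq ?_)
  rw [Real.mul_rpow hC.le (by positivity), one_div,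
    Real.pow_rpow_inv_natCast t.coe_nonneg (by omega)]

theorem le_pow_mul_of_map_le {α : Type*} {T : α → α} {q : α → ℝ} {t : ℝ} (ht : 0 ≤ t)
    (hT : ∀ x, q (T x) ≤ t * q x) (n : ℕ) (x : α) : q (T^[n] x) ≤ t ^ n * q x := by
  induction n with
  | zero => simp
  | succ n ih =>
    rw [Function.iterate_succ_apply', pow_succ', mul_assoc]
    exact (hT _).trans (mul_le_mul_of_nonneg_left ih ht)

section WeightedGraphNorm

variable {D X : Type*} [SeminormedAddCommGroup X] (J Lam : D → X)

def weightedGraphNorm (w : ℝ) (d : D) : ℝ := ‖J d‖ + w * ‖Lam d‖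

variable {J Lam}

theorem weightedGraphNorm_le_norm [SeminormedAddCommGroup D]
    (hgraph : ∀ d, ‖d‖ = ‖J d‖ + ‖Lam d‖) {w : ℝ} (hw₁ : w ≤ 1) (d : D) :
    weightedGraphNorm J Lam w d ≤ ‖d‖ := by
  rw [weightedGraphNorm, hgraph d]
  nlinarith [norm_nonneg (Lam d)]

theorem mul_norm_le_weightedGraphNorm [SeminormedAddCommGroup D]
    (hgraph : ∀ d, ‖d‖ = ‖J d‖ + ‖Lam d‖) {w : ℝ} (hw₁ : w ≤ 1) (d : D) :
    w * ‖d‖ ≤ weightedGraphNorm J Lam w d := by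
  rw [weightedGraphNorm, hgraph d]
  nlinarith [norm_nonneg (J d)]

theorem weightedGraphNorm_map_le {T : D → D} {M α t w : ℝ}
    (hJ : ∀ d, ‖J (T d)‖ ≤ M * ‖J d‖) (hLam : ∀ d, ‖Lam (T d)‖ ≤ α * ‖J d‖ + t * ‖Lam d‖)
    (hw : 0 ≤ w) (hwt : M + w * α ≤ t) (d : D) :
    weightedGraphNorm J Lam w (T d) ≤ t * weightedGraphNorm J Lam w d := by
  have hLam' := mul_le_mul_of_nonneg_left (hLam d) hw
  have hJd := mul_le_mul_of_nonneg_right hwt (norm_nonneg (J d))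
  unfold weightedGraphNorm
  linarith [hJ d]

theorem norm_iterate_le_of_weightedGraphNorm_map_le [SeminormedAddCommGroup D]
    (hgraph : ∀ d, ‖d‖ = ‖J d‖ + ‖Lam d‖) {T : D → D} {t w : ℝ} (ht : 0 ≤ t) (hw₀ : 0 < w)
    (hw₁ : w ≤ 1) (hT : ∀ d, weightedGraphNorm J Lam w (T d) ≤ t * weightedGraphNorm J Lam w d)
    (n : ℕ) (d : D) : ‖T^[n] d‖ ≤ w⁻¹ * t ^ n * ‖d‖ := by
  rw [mul_assoc, le_inv_mul_iff₀ hw₀]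
  calc w * ‖T^[n] d‖ ≤ weightedGraphNorm J Lam w (T^[n] d) :=
        mul_norm_le_weightedGraphNorm hgraph hw₁ _
    _ ≤ t ^ n * weightedGraphNorm J Lam w d := le_pow_mul_of_map_le ht hT n d
    _ ≤ t ^ n * ‖d‖ := by gcongr; exact weightedGraphNorm_le_norm hgraph hw₁ d

end WeightedGraphNorm

section Commutator

variable {𝕜 D X : Type*} [NontriviallyNormedField 𝕜] [SeminormedAddCommGroup X] [NormedSpace 𝕜 X]
  {J Lam K : D → X} {S : X →L[𝕜] X} {S' : D → D}

theorem norm_map_comp_le_of_commutator (hcomm : ∀ d, Lam (S' d) - S (Lam d) = K d) {α β : ℝ}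
    (hK : ∀ d, ‖K d‖ ≤ α * ‖J d‖ + β * ‖Lam d‖) (d : D) :
    ‖Lam (S' d)‖ ≤ α * ‖J d‖ + (‖S‖ + β) * ‖Lam d‖ := by
  rw [← sub_add_cancel (Lam (S' d)) (S (Lam d)), hcomm]
  linarith [norm_add_le (K d) (S (Lam d)), hK d, S.le_opNorm (Lam d)]

theorem norm_iterate_le_of_commutator [SeminormedAddCommGroup D]
    (hgraph : ∀ d, ‖d‖ = ‖J d‖ + ‖Lam d‖) (hS' : ∀ d, J (S' d) = S (J d))
    (hcomm : ∀ d, Lam (S' d) - S (Lam d) = K d) {α β : ℝ} (hα : 0 ≤ α) (hβ : 0 < β)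
    (hK : ∀ d, ‖K d‖ ≤ α * ‖J d‖ + β * ‖Lam d‖) (n : ℕ) (d : D) :
    ‖S'^[n] d‖ ≤ (α + β) / β * (‖S‖ + β) ^ n * ‖d‖ := by
  have hw₀ : 0 < β / (α + β) := by positivity
  have hw₁ : β / (α + β) ≤ 1 := div_le_one_of_le₀ (le_add_of_nonneg_left hα) (by positivity)
  have hwα : β / (α + β) * α ≤ β := by
    rw [div_mul_eq_mul_div, div_le_iff₀ (by positivity)]
    nlinarith
  rw [← inv_div]
  refine norm_iterate_le_of_weightedGraphNorm_map_le hgraph (by positivity) hw₀ hw₁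
    (weightedGraphNorm_map_le (fun d => ?_) (norm_map_comp_le_of_commutator hcomm hK) hw₀.le
      (add_le_add_right hwα _)) n d
  rw [hS']
  exact S.le_opNorm (J d)

end Commutator

theorem stmt0_general
    {X D : Type*} [NormedAddCommGroup X] [NormedSpace ℂ X]
    [NormedAddCommGroup D] [NormedSpace ℂ D] [CompleteSpace D]
    (J : D →L[ℂ] X)
    (Lam : D →L[ℂ] X)
    (hgraph : ∀ d : D, ‖d‖ = ‖J d‖ + ‖Lam d‖)
    (S : X →L[ℂ] X) (S' : Module.End ℂ D)
    (hS' : ∀ d : D, J (S' d) = S (J d))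
    (K : D →ₗ[ℂ] X)
    (βstar : ℝ)
    (hK : ∀ β : ℝ, βstar < β → ∃ α : ℝ, 0 ≤ α ∧ ∀ d : D, ‖K d‖ ≤ α * ‖J d‖ + β * ‖Lam d‖)
    (hcomm : ∀ d : D, Lam (S' d) - S (Lam d) = K d) :
    ∃ S'' : D →L[ℂ] D, (∀ d : D, S'' d = S' d) ∧
      spectralRadius ℂ S'' ≤ (‖S‖₊ : ENNReal) + ENNReal.ofReal βstar := by
  have hpow : ∀ β : ℝ≥0, 0 < β → βstar < β → ∃ C, 0 ≤ C ∧ ∀ n d,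
      ‖S'^[n] d‖ ≤ C * ((‖S‖₊ + β : ℝ≥0) : ℝ) ^ n * ‖d‖ := by
    intro β hβ hβstar
    obtain ⟨α, hα, hKα⟩ := hK β hβstar
    exact ⟨(α + β) / β, by positivity,
      by simpa using norm_iterate_le_of_commutator hgraph hS' hcomm hα hβ hKα⟩
  have hβε : ∀ ε : ℝ≥0, 0 < ε → βstar < βstar.toNNReal + ε := fun ε hε => by
    linarith [Real.le_coe_toNNReal βstar, (NNReal.coe_pos.2 hε : (0 : ℝ) < ε)]
  obtain ⟨C₁, -, hC₁⟩ := hpow (βstar.toNNReal + 1) (by positivity) (hβε 1 one_pos)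
  let S'' : D →L[ℂ] D := S'.mkContinuous _ fun d => by simpa using hC₁ 1 d
  refine ⟨S'', fun _ => rfl, ENNReal.le_of_forall_pos_le_add fun ε hε _ => ?_⟩
  obtain ⟨C, hC, hCε⟩ := hpow (βstar.toNNReal + ε) (by positivity) (hβε ε hε)
  have hnorm : ∀ n, ‖S'' ^ n‖ ≤ C * ((‖S‖₊ + (βstar.toNNReal + ε) : ℝ≥0) : ℝ) ^ n := fun n =>
    (S'' ^ n).opNorm_le_bound (by positivity) fun d => by
      rw [pow_apply_eq_iterate]
      exact hCε n d
  simpa [ENNReal.ofReal, add_assoc] using spectralRadius_le_of_norm_pow_le (𝕜 := ℂ) hnorm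

/-- Lemma on the spectral radius with respect to the graph norm.
Let `Λ` be a closed operator on a Banach space `X`.  We model the domain of `Λ`, equipped with
the graph norm `‖x‖_Λ = ‖x‖ + ‖Λx‖`, as a Banach space `D` together with an injective continuous
inclusion `J : D → X` and the operator `Λ : D → X`, subject to `‖d‖_D = ‖J d‖ + ‖Λ d‖`
(closedness of `Λ` corresponds to completeness of `D`).

Let `K : D → X` be `Λ`-bounded with `Λ`-bound `β* ≥ 0` (for every `β > β*` there is `α ≥ 0`
with `‖Kd‖ ≤ α‖Jd‖ + β‖Λd‖`), and let `S : X → X` be bounded, mapping `Dom(Λ)` into itself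
(i.e. there is a linear map `S' : D → D` with `J ∘ S' = S ∘ J`), with the commutator relation
`Λ S' d − S Λ d = K d` on `D`.  Then the restriction `S'` of `S` to `Dom(Λ)` is bounded with
respect to the graph norm, and its spectral radius satisfies `r_Λ(S) ≤ ‖S‖ + β*`. -/
theorem stmt0
    {X D : Type*} [NormedAddCommGroup X] [NormedSpace ℂ X] [CompleteSpace X]
    [NormedAddCommGroup D] [NormedSpace ℂ D] [CompleteSpace D]
    (J : D →L[ℂ] X) (hJ : Function.Injective J)
    (Lam : D →L[ℂ] X)
    (hgraph : ∀ d : D, ‖d‖ = ‖J d‖ + ‖Lam d‖)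
    (S : X →L[ℂ] X) (S' : Module.End ℂ D)
    (hS' : ∀ d : D, J (S' d) = S (J d))
    (K : D →ₗ[ℂ] X)
    (βstar : ℝ) (hβstar : 0 ≤ βstar)
    (hK : ∀ β : ℝ, βstar < β → ∃ α : ℝ, 0 ≤ α ∧ ∀ d : D, ‖K d‖ ≤ α * ‖J d‖ + β * ‖Lam d‖)
    (hcomm : ∀ d : D, Lam (S' d) - S (Lam d) = K d) :
    ∃ S'' : D →L[ℂ] D, (∀ d : D, S'' d = S' d) ∧
      spectralRadius ℂ S'' ≤ (‖S‖₊ : ENNReal) + ENNReal.ofReal βstar :=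
  stmt0_general J Lam hgraph S S' hS' K βstar hK hcomm
end

section
/- Under the same hypotheses as Lemma specRad (S bounded mapping Dom(Λ) into itself, ΛSx − SΛx = Kx with ‖Kx‖ ≤ α‖x‖ + β‖Λx‖ on Dom(Λ)), for every k ∈ ℕ and x ∈ Dom(Λ) one has ‖S^k x‖_Λ ≤ (‖S‖ + β)^k ‖x‖_Λ + kα(‖S‖ + β)^{k−1} ‖x‖. -/
/-!
Since `Λ S x = S Λ x + K x`, one application of `S` obeys
`‖S x‖_Λ ≤ (‖S‖ + β) ‖x‖_Λ + α ‖x‖`, while the plain norm grows only by the factor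
`‖S‖ ≤ ‖S‖ + β`. Iterating the first inequality and inserting the geometric bound for the
second, each of the `k` steps contributes an error term `α (‖S‖ + β)^(k-1) ‖x‖`.
-/

theorem le_pow_mul_add_of_succ_le {u v : ℕ → ℝ} {a α : ℝ} (ha : 0 ≤ a) (hα : 0 ≤ α)
    (hv : ∀ n, v n ≤ a ^ n * v 0) (hu : ∀ n, u (n + 1) ≤ a * u n + α * v n) (k : ℕ) :
    u k ≤ a ^ k * u 0 + k * α * a ^ (k - 1) * v 0 := by
  induction k with
  | zero => simp
  | succ n ih =>
    have hcoeff : (n : ℝ) * a ^ (n - 1) * a = n * a ^ n := by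
      cases n with
      | zero => simp
      | succ m => rw [Nat.add_sub_cancel, pow_succ]; ring
    calc u (n + 1) ≤ a * u n + α * v n := hu n
      _ ≤ a * (a ^ n * u 0 + n * α * a ^ (n - 1) * v 0) + α * (a ^ n * v 0) :=
          add_le_add (mul_le_mul_of_nonneg_left ih ha) (mul_le_mul_of_nonneg_left (hv n) hα)
      _ = a ^ (n + 1) * u 0 + (n + 1 : ℕ) * α * a ^ (n + 1 - 1) * v 0 := by
          rw [Nat.add_sub_cancel, pow_succ]
          push_cast
          linear_combination α * v 0 * hcoeff

section GraphNorm

variable {𝕜 X D : Type*} [NontriviallyNormedField 𝕜] [NormedAddCommGroup X] [NormedSpace 𝕜 X]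
  {J Lam : D → X} {S : X →L[𝕜] X} {S' : D → D} {α β : ℝ}

theorem norm_apply_le_of_semiconj (hS' : Function.Semiconj J S' S) (d : D) :
    ‖J (S' d)‖ ≤ ‖S‖ * ‖J d‖ := by
  rw [hS']
  exact S.le_opNorm _

theorem norm_apply_le_graph_of_semiconj [NormedAddCommGroup D] (hβ : 0 ≤ β)
    (hgraph : ∀ d, ‖d‖ = ‖J d‖ + ‖Lam d‖) (hS' : Function.Semiconj J S' S)
    (hcomm : ∀ d, ‖Lam (S' d) - S (Lam d)‖ ≤ α * ‖J d‖ + β * ‖Lam d‖) (d : D) :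
    ‖S' d‖ ≤ (‖S‖ + β) * ‖d‖ + α * ‖J d‖ := by
  have hLam : ‖Lam (S' d)‖ ≤ ‖S‖ * ‖Lam d‖ + (α * ‖J d‖ + β * ‖Lam d‖) :=
    calc ‖Lam (S' d)‖ ≤ ‖S (Lam d)‖ + ‖Lam (S' d) - S (Lam d)‖ := norm_le_insert' _ _
      _ ≤ _ := add_le_add (S.le_opNorm _) (hcomm d)
  have hLam_le : β * ‖Lam d‖ ≤ β * ‖d‖ := by
    gcongr
    linarith [hgraph d, norm_nonneg (J d)]
  have hSd : ‖S‖ * ‖d‖ = ‖S‖ * ‖J d‖ + ‖S‖ * ‖Lam d‖ := by rw [hgraph d, mul_add]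
  linarith [hgraph (S' d), norm_apply_le_of_semiconj hS' d]

end GraphNorm

theorem stmt1_general
    {X D : Type*} [NormedAddCommGroup X] [NormedSpace ℂ X]
    [NormedAddCommGroup D] [NormedSpace ℂ D]
    (J : D →L[ℂ] X)
    (Lam : D →L[ℂ] X)
    (hgraph : ∀ d : D, ‖d‖ = ‖J d‖ + ‖Lam d‖)
    (S : X →L[ℂ] X) (S' : Module.End ℂ D)
    (hS' : ∀ d : D, J (S' d) = S (J d))
    (K : D →ₗ[ℂ] X)
    (α β : ℝ) (hα : 0 ≤ α) (hβ : 0 ≤ β)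
    (hcomm : ∀ d : D, Lam (S' d) - S (Lam d) = K d)
    (hK : ∀ d : D, ‖K d‖ ≤ α * ‖J d‖ + β * ‖Lam d‖) :
    ∀ (k : ℕ) (d : D),
      ‖(S' ^ k) d‖ ≤ (‖S‖ + β) ^ k * ‖d‖ + (k : ℝ) * α * (‖S‖ + β) ^ (k - 1) * ‖J d‖ := by
  intro k d
  have hiter : ∀ n, (S' ^ (n + 1)) d = S' ((S' ^ n) d) := fun n => by
    rw [pow_succ', Module.End.mul_apply]
  have hJ : ∀ n, ‖J ((S' ^ n) d)‖ ≤ (‖S‖ + β) ^ n * ‖J d‖ := fun n =>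
    calc ‖J ((S' ^ n) d)‖ ≤ ‖S‖ ^ n * ‖J ((S' ^ 0) d)‖ :=
          le_geom (u := fun n => ‖J ((S' ^ n) d)‖) (norm_nonneg S) n fun m _ => by
            simpa only [hiter] using norm_apply_le_of_semiconj hS' _
      _ ≤ (‖S‖ + β) ^ n * ‖J d‖ := by
          rw [pow_zero, Module.End.one_apply]
          gcongr
          exact le_add_of_nonneg_right hβ
  have hcomm_le : ∀ x, ‖Lam (S' x) - S (Lam x)‖ ≤ α * ‖J x‖ + β * ‖Lam x‖ := fun x => by
    rw [hcomm]
    exact hK x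
  simpa using le_pow_mul_add_of_succ_le (u := fun n => ‖(S' ^ n) d‖)
    (v := fun n => ‖J ((S' ^ n) d)‖) (a := ‖S‖ + β)
    (by positivity) hα (by simpa using hJ)
    (fun n => by simpa only [hiter] using norm_apply_le_graph_of_semiconj hβ hgraph hS' hcomm_le _) k

/-- Let `Λ` be a closed operator on a Banach space `X`.  We model the domain of `Λ`, equipped with
the graph norm `‖x‖_Λ = ‖x‖ + ‖Λx‖`, as a Banach space `D` together with an injective continuous
inclusion `J : D → X` and the operator `Λ : D → X`, subject to `‖d‖_D = ‖J d‖ + ‖Λ d‖`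
(closedness of `Λ` corresponds to completeness of `D`).

Let `S : X → X` be bounded with `S(Dom Λ) ⊆ Dom Λ`, i.e. there is a linear map
`S' : D → D` with `J ∘ S' = S ∘ J`, and let `K : D → X` satisfy the commutator relation
`Λ(S'd) − S(Λd) = Kd` and the relative bound `‖Kd‖ ≤ α‖Jd‖ + β‖Λd‖` with `α, β ≥ 0`.
Then for every `k ∈ ℕ` and every `d ∈ D`:
`‖S'^k d‖_Λ ≤ (‖S‖ + β)^k ‖d‖_Λ + k·α·(‖S‖ + β)^(k−1) ‖J d‖`. -/
theorem stmt1
    {X D : Type*} [NormedAddCommGroup X] [NormedSpace ℂ X] [CompleteSpace X]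
    [NormedAddCommGroup D] [NormedSpace ℂ D] [CompleteSpace D]
    (J : D →L[ℂ] X) (hJ : Function.Injective J)
    (Lam : D →L[ℂ] X)
    (hgraph : ∀ d : D, ‖d‖ = ‖J d‖ + ‖Lam d‖)
    (S : X →L[ℂ] X) (S' : Module.End ℂ D)
    (hS' : ∀ d : D, J (S' d) = S (J d))
    (K : D →ₗ[ℂ] X)
    (α β : ℝ) (hα : 0 ≤ α) (hβ : 0 ≤ β)
    (hcomm : ∀ d : D, Lam (S' d) - S (Lam d) = K d)
    (hK : ∀ d : D, ‖K d‖ ≤ α * ‖J d‖ + β * ‖Lam d‖) :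
    ∀ (k : ℕ) (d : D),
      ‖(S' ^ k) d‖ ≤ (‖S‖ + β) ^ k * ‖d‖ + (k : ℝ) * α * (‖S‖ + β) ^ (k - 1) * ‖J d‖ :=
  stmt1_general J Lam hgraph S S' hS' K α β hα hβ hcomm hK
end

section
/- Let P and Q be orthogonal projections on a Hilbert space H with ‖P − Q‖ < 1, so that Ran Q = { f ⊕ Xf : f ∈ Ran P } for a bounded operator X: Ran P → Ran P⊥. Let Y be the skew-symmetric bounded operator given in block form with respect to Ran P ⊕ Ran P⊥ by Y(f ⊕ g) = (−X*g) ⊕ (Xf). Then I + Y and I − Y are bijective and (I − Y)(I + Y) equals the block-diagonal operator (I + X*X) ⊕ (I + XX*). -/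
/-!
Write `T = (1 - Y)(1 + Y)`. Expanding `T (f + g)` with `Y (f + g) = -X* g + X f`, the
cross terms cancel and `T` acts blockwise as `(1 + X* X) ⊕ (1 + X X*)`. Both blocks are
bijective, being bounded below by the identity: `re ⟪(1 + X* X) f, f⟫ = ‖f‖² + ‖X f‖²`.
Hence `T` is bijective, and since `1 - Y` and `1 + Y` commute, each factor is invertible.
-/

open Function
open scoped InnerProductSpace

section BlockOperators

variable {R M : Type*} [Ring R] [AddCommGroup M] [Module R M]

theorem LinearMap.isCompl_range_range_one_sub {P : Module.End R M} (hP : IsIdempotentElem P) :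
    IsCompl (LinearMap.range P) (LinearMap.range (1 - P)) :=
  LinearMap.IsIdempotentElem.ker_eq_range_one_sub hP ▸ LinearMap.IsIdempotentElem.isCompl hP

theorem Submodule.bijective_of_apply_add_eq {p q : Submodule R M} (h : IsCompl p q) {T : M → M}
    {A : p → p} {B : q → q} (hA : Bijective A) (hB : Bijective B)
    (hT : ∀ (f : p) (g : q), T (f + g) = A f + B g) : Bijective T := by
  let e := Submodule.prodEquivOfIsCompl p q h
  have hTe : T = e ∘ Prod.map A B ∘ e.symm := by
    funext x
    conv_lhs => rw [← e.apply_symm_apply x]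
    exact hT _ _
  rw [hTe]
  exact e.bijective.comp ((hA.prodMap hB).comp e.symm.bijective)

theorem Module.End.one_sub_mul_one_add_apply_add {p q : Submodule R M} (X : p →ₗ[R] q)
    (Z : q →ₗ[R] p) {Y : Module.End R M} (hY : ∀ (f : p) (g : q), Y (f + g) = -(Z g : M) + X f)
    (f : p) (g : q) :
    ((1 - Y) * (1 + Y)) (f + g) = ((f + Z (X f) : p) : M) + ((g + X (Z g) : q) : M) := by
  have hplus : (1 + Y) (f + g) = ((f - Z g : p) : M) + ((g + X f : q) : M) := by
    simp only [LinearMap.add_apply, Module.End.one_apply, hY, Submodule.coe_add, Submodule.coe_sub]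
    abel
  rw [Module.End.mul_apply, hplus, LinearMap.sub_apply, Module.End.one_apply, hY]
  simp only [map_add, map_sub, Submodule.coe_add, Submodule.coe_sub]
  abel

theorem Module.End.bijective_one_add_and_one_sub {Y : Module.End R M}
    (h : Bijective ⇑((1 - Y) * (1 + Y))) : Bijective ⇑(1 + Y) ∧ Bijective ⇑(1 - Y) := by
  have hcomm : Commute (1 - Y) (1 + Y) := by
    show (1 - Y) * (1 + Y) = (1 + Y) * (1 - Y)
    noncomm_ring
  simp only [← Module.End.isUnit_iff] at h ⊢
  exact (hcomm.isUnit_mul_iff.mp h).symm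

end BlockOperators

theorem ContinuousLinearMap.bijective_one_add_adjoint_comp_self {𝕜 E F : Type*} [RCLike 𝕜]
    [NormedAddCommGroup E] [InnerProductSpace 𝕜 E] [CompleteSpace E]
    [NormedAddCommGroup F] [InnerProductSpace 𝕜 F] [CompleteSpace F] (X : E →L[𝕜] F) :
    Bijective ⇑(1 + X.adjoint ∘L X) := by
  rw [← isUnit_iff_bijective]
  refine isUnit_of_forall_le_norm_inner_map _ (c := 1) one_pos fun x => ?_
  have hre : RCLike.re ⟪(1 + X.adjoint ∘L X) x, x⟫_𝕜 = ‖x‖ ^ 2 + ‖X x‖ ^ 2 := by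
    simp only [add_apply, one_apply_eq_self, comp_apply, inner_add_left, adjoint_inner_left,
      map_add, inner_self_eq_norm_sq]
  calc ‖x‖ ^ 2 * ↑(1 : NNReal) ≤ ‖x‖ ^ 2 + ‖X x‖ ^ 2 := by simp
    _ = RCLike.re ⟪(1 + X.adjoint ∘L X) x, x⟫_𝕜 := hre.symm
    _ ≤ ‖⟪(1 + X.adjoint ∘L X) x, x⟫_𝕜‖ := RCLike.re_le_norm _

theorem stmt6_general
    {H : Type*} [NormedAddCommGroup H] [InnerProductSpace ℂ H]
    (P : H →L[ℂ] H)
    (hPproj : IsIdempotentElem P)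
    [CompleteSpace (LinearMap.range (P : H →ₗ[ℂ] H))] [CompleteSpace (LinearMap.range ((1 - P : H →L[ℂ] H) : H →ₗ[ℂ] H))]
    (X : LinearMap.range (P : H →ₗ[ℂ] H) →L[ℂ] LinearMap.range ((1 - P : H →L[ℂ] H) : H →ₗ[ℂ] H))
    (Y : H →L[ℂ] H)
    (hY : ∀ (f : LinearMap.range (P : H →ₗ[ℂ] H)) (g : LinearMap.range ((1 - P : H →L[ℂ] H) : H →ₗ[ℂ] H)),
      Y ((f : H) + (g : H)) = -((X.adjoint g : H)) + ((X f : H))) :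
    Function.Bijective ⇑((1 : H →L[ℂ] H) + Y) ∧ Function.Bijective ⇑((1 : H →L[ℂ] H) - Y) ∧
      ∀ (f : LinearMap.range (P : H →ₗ[ℂ] H)) (g : LinearMap.range ((1 - P : H →L[ℂ] H) : H →ₗ[ℂ] H)),
        (((1 : H →L[ℂ] H) - Y) * ((1 : H →L[ℂ] H) + Y)) ((f : H) + (g : H)) =
          (((1 + X.adjoint ∘L X) f : H)) + (((1 + X ∘L X.adjoint) g : H)) := by
  have hblock := fun f g ↦ Module.End.one_sub_mul_one_add_apply_add (Y := (Y : H →ₗ[ℂ] H))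
    X X.adjoint (fun f g ↦ hY f g) f g
  have hcompl : IsCompl (LinearMap.range (P : H →ₗ[ℂ] H))
      (LinearMap.range ((1 - P : H →L[ℂ] H) : H →ₗ[ℂ] H)) :=
    LinearMap.isCompl_range_range_one_sub (hPproj.map ContinuousLinearMap.toLinearMapRingHom)
  have hadj := X.adjoint.bijective_one_add_adjoint_comp_self
  rw [ContinuousLinearMap.adjoint_adjoint] at hadj
  have hT : Bijective ⇑((1 - (Y : H →ₗ[ℂ] H)) * (1 + (Y : H →ₗ[ℂ] H))) :=
    Submodule.bijective_of_apply_add_eq hcompl X.bijective_one_add_adjoint_comp_self hadj hblock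
  obtain ⟨hplus, hminus⟩ := Module.End.bijective_one_add_and_one_sub hT
  exact ⟨hplus, hminus, hblock⟩

/-- Let `P` and `Q` be orthogonal projections on a complex Hilbert space `H` with `‖P − Q‖ < 1`,
so that `Ran Q = { f ⊕ Xf : f ∈ Ran P }` for a bounded operator `X : Ran P → Ran P⊥`
(here `P⊥ = 1 − P`).  Let `Y` be the bounded operator given in block form with respect to
`Ran P ⊕ Ran P⊥` by `Y(f ⊕ g) = (−X*g) ⊕ (Xf)`.  Then `I + Y` and `I − Y` are bijective and
`(I − Y)(I + Y)` equals the block-diagonal operator `(I + X*X) ⊕ (I + XX*)`. -/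
theorem stmt6
    {H : Type*} [NormedAddCommGroup H] [InnerProductSpace ℂ H] [CompleteSpace H]
    (P Q : H →L[ℂ] H)
    (hPproj : IsIdempotentElem P) (hPsa : IsSelfAdjoint P)
    (hQproj : IsIdempotentElem Q) (hQsa : IsSelfAdjoint Q)
    (hPQ : ‖P - Q‖ < 1)
    [CompleteSpace (LinearMap.range (P : H →ₗ[ℂ] H))] [CompleteSpace (LinearMap.range ((1 - P : H →L[ℂ] H) : H →ₗ[ℂ] H))]
    (X : LinearMap.range (P : H →ₗ[ℂ] H) →L[ℂ] LinearMap.range ((1 - P : H →L[ℂ] H) : H →ₗ[ℂ] H))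
    (hgraph : (LinearMap.range (Q : H →ₗ[ℂ] H) : Set H) =
      {h : H | ∃ f : LinearMap.range (P : H →ₗ[ℂ] H), h = (f : H) + (X f : H)})
    (Y : H →L[ℂ] H)
    (hY : ∀ (f : LinearMap.range (P : H →ₗ[ℂ] H)) (g : LinearMap.range ((1 - P : H →L[ℂ] H) : H →ₗ[ℂ] H)),
      Y ((f : H) + (g : H)) = -((X.adjoint g : H)) + ((X f : H))) :
    Function.Bijective ⇑((1 : H →L[ℂ] H) + Y) ∧ Function.Bijective ⇑((1 : H →L[ℂ] H) - Y) ∧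
      ∀ (f : LinearMap.range (P : H →ₗ[ℂ] H)) (g : LinearMap.range ((1 - P : H →L[ℂ] H) : H →ₗ[ℂ] H)),
        (((1 : H →L[ℂ] H) - Y) * ((1 : H →L[ℂ] H) + Y)) ((f : H) + (g : H)) =
          (((1 + X.adjoint ∘L X) f : H)) + (((1 + X ∘L X.adjoint) g : H)) :=
  stmt6_general P hPproj X Y hY
end

section
/- Let P and Q be orthogonal projections with ‖P − Q‖ < 1, X the bounded operator with Ran Q = {f ⊕ Xf : f ∈ Ran P}, and Y = [[0, −X*],[X, 0]]. Let 𝒞 be a subspace invariant under both P and Q with 𝒞 = (𝒞 ∩ Ran P) ⊕ (𝒞 ∩ Ran P⊥) =: 𝒞₊ ⊕ 𝒞₋. Then the following are equivalent: (i) I + X*X maps 𝒞₊ into itself; (ii) I + XX* maps 𝒞₋ into itself; (iii) Y maps 𝒞 into itself; (iv) I + Y maps 𝒞 into itself; (v) I − Y maps 𝒞 into itself. -/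
/-!
Since `Ran Q` is the graph of `X` and `Ran P ⟂ Ran P⊥`, the orthogonality of `x - Q x` to the
graph says that `Q (f ⊕ g) = k ⊕ X k` where `(I + X*X) k = f + X* g`, and `I + X*X` is injective.
As `𝒞` is invariant under `P` and `Q`, whenever `f ⊕ g ∈ 𝒞` both `k` and `X k` lie in `𝒞`.
Each of (i) and (ii) is thereby equivalent to `X 𝒞₊ ⊆ 𝒞` and `X* 𝒞₋ ⊆ 𝒞`, which is (iii) by the
block form of `Y`; (iv) and (v) differ from (iii) by the identity.
-/

open scoped InnerProductSpace
open ContinuousLinearMap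

section Hilbert

variable {𝕜 E F : Type*} [RCLike 𝕜]
  [NormedAddCommGroup E] [InnerProductSpace 𝕜 E] [CompleteSpace E]
  [NormedAddCommGroup F] [InnerProductSpace 𝕜 F] [CompleteSpace F]

theorem ContinuousLinearMap.one_add_adjoint_comp_self_apply (X : E →L[𝕜] F) (k : E) :
    (1 + X.adjoint ∘L X) k = k + X.adjoint (X k) :=
  rfl

theorem ContinuousLinearMap.one_add_comp_adjoint_apply (X : E →L[𝕜] F) (g : F) :
    (1 + X ∘L X.adjoint) g = g + X (X.adjoint g) :=
  rfl

theorem ContinuousLinearMap.re_inner_one_add_adjoint_comp_self_apply (X : E →L[𝕜] F) (k : E) :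
    RCLike.re ⟪(1 + X.adjoint ∘L X) k, k⟫_𝕜 = ‖k‖ ^ 2 + ‖X k‖ ^ 2 := by
  simp [inner_add_left, adjoint_inner_left]

theorem ContinuousLinearMap.injective_one_add_adjoint_comp_self (X : E →L[𝕜] F) :
    Function.Injective ⇑(1 + X.adjoint ∘L X) := by
  refine (injective_iff_map_eq_zero _).2 fun k hk => norm_eq_zero.1 ?_
  have h := X.re_inner_one_add_adjoint_comp_self_apply k
  rw [hk, inner_zero_left, map_zero] at h
  nlinarith [norm_nonneg k, sq_nonneg ‖X k‖]

theorem ContinuousLinearMap.comp_one_add_adjoint_comp_self (X : E →L[𝕜] F) :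
    X ∘L (1 + X.adjoint ∘L X) = (1 + X ∘L X.adjoint) ∘L X := by
  ext k; simp

theorem ContinuousLinearMap.adjoint_comp_one_add_comp_adjoint (X : E →L[𝕜] F) :
    X.adjoint ∘L (1 + X ∘L X.adjoint) = (1 + X.adjoint ∘L X) ∘L X.adjoint := by
  ext k; simp

end Hilbert

section Graph

variable {𝕜 H : Type*} [RCLike 𝕜] [NormedAddCommGroup H] [InnerProductSpace 𝕜 H]
  [CompleteSpace H]

theorem IsStarProjection.inner_sub_apply_apply_eq_zero {Q : H →L[𝕜] H}
    (hQ : IsStarProjection Q) (x y : H) : ⟪x - Q x, Q y⟫_𝕜 = 0 :=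
  calc ⟪x - Q x, Q y⟫_𝕜 = ⟪Q (x - Q x), y⟫_𝕜 := (hQ.isSelfAdjoint.isSymmetric _ _).symm
    _ = 0 := by
      rw [map_sub, show Q (Q x) = Q x from DFunLike.congr_fun hQ.isIdempotentElem.eq x,
        sub_self, inner_zero_left]

omit [CompleteSpace H] in
theorem Submodule.IsOrtho.inner_add_add {E F : Submodule 𝕜 H} (hEF : E ⟂ F) (f f' : E)
    (g g' : F) : ⟪(f : H) + g, f' + g'⟫_𝕜 = ⟪f, f'⟫_𝕜 + ⟪g, g'⟫_𝕜 := by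
  simp only [inner_add_left, inner_add_right, Submodule.coe_inner, hEF.inner_eq f.2 g'.2,
    hEF.symm.inner_eq g.2 f'.2]
  ring

variable {E F : Submodule 𝕜 H} [CompleteSpace E] [CompleteSpace F] {X : E →L[𝕜] F}
  {Q : H →L[𝕜] H}

theorem IsStarProjection.exists_apply_add_eq_of_range_eq_graph (hQ : IsStarProjection Q)
    (hEF : E ⟂ F)
    (hgraph : (LinearMap.range (Q : H →ₗ[𝕜] H) : Set H) = {h | ∃ f : E, h = (f : H) + (X f : H)})
    (f : E) (g : F) :
    ∃ k : E, Q (f + g) = k + X k ∧ (1 + X.adjoint ∘L X) k = f + X.adjoint g := by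
  obtain ⟨k, hk⟩ : Q (f + g) ∈ {h : H | ∃ k : E, h = k + X k} := hgraph ▸ ⟨_, rfl⟩
  refine ⟨k, hk, ?_⟩
  set r := (f - k) + X.adjoint (g - X k) with hr_def
  have hperp : ⟪((f - k : E) : H) + (g - X k : F), r + X r⟫_𝕜 = 0 := by
    obtain ⟨y, hy⟩ : (r : H) + X r ∈ (LinearMap.range (Q : H →ₗ[𝕜] H) : Set H) :=
      hgraph ▸ ⟨r, rfl⟩
    rw [← hy, coe_coe, ← hQ.inner_sub_apply_apply_eq_zero (f + g) y, hk]
    push_cast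
    congr 1
    abel
  have hr : r = 0 := by
    rwa [hEF.inner_add_add, ← adjoint_inner_left, ← inner_add_left, inner_self_eq_zero] at hperp
  rw [eq_comm, ← sub_eq_zero, ← hr, hr_def, add_apply, one_apply_eq_self, comp_apply, map_sub]
  abel

theorem IsStarProjection.apply_add_eq_of_range_eq_graph (hQ : IsStarProjection Q)
    (hEF : E ⟂ F)
    (hgraph : (LinearMap.range (Q : H →ₗ[𝕜] H) : Set H) = {h | ∃ f : E, h = (f : H) + (X f : H)})
    {f k : E} {g : F} (hk : (1 + X.adjoint ∘L X) k = f + X.adjoint g) : Q (f + g) = k + X k := by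
  obtain ⟨k', hk', hAk'⟩ := hQ.exists_apply_add_eq_of_range_eq_graph hEF hgraph f g
  rwa [X.injective_one_add_adjoint_comp_self (hAk'.trans hk.symm)] at hk'

end Graph

section Blocks

variable {R M : Type*} [Ring R] [AddCommGroup M] [Module R M] [TopologicalSpace M]
  {P : M →L[R] M} {C : Submodule R M}

local notation "Ran " T:max => LinearMap.range ((T : M →L[R] M) : M →ₗ[R] M)

theorem IsIdempotentElem.apply_coe_range (hP : IsIdempotentElem P) (f : Ran P) : P f = f := by
  obtain ⟨-, a, rfl⟩ := f
  exact DFunLike.congr_fun hP a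

variable [IsTopologicalAddGroup M]

theorem IsIdempotentElem.apply_coe_range_one_sub (hP : IsIdempotentElem P) (g : Ran (1 - P)) :
    P g = 0 := by
  obtain ⟨-, b, rfl⟩ := g
  simp [← mul_apply_eq_comp, hP.eq]

theorem IsIdempotentElem.mem_and_mem_of_add_mem (hP : IsIdempotentElem P)
    (hCP : ∀ x ∈ C, P x ∈ C) {f : Ran P} {g : Ran (1 - P)} (h : (f : M) + g ∈ C) :
    (f : M) ∈ C ∧ (g : M) ∈ C := by
  have hf : (f : M) ∈ C := by
    simpa [hP.apply_coe_range, hP.apply_coe_range_one_sub] using hCP _ h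
  exact ⟨hf, (C.add_mem_iff_right hf).1 h⟩

theorem exists_add_of_mem (hCP : ∀ x ∈ C, P x ∈ C) {x : M} (hx : x ∈ C) :
    ∃ (f : Ran P) (g : Ran (1 - P)), x = f + g ∧ (f : M) ∈ C ∧ (g : M) ∈ C :=
  ⟨⟨P x, x, rfl⟩, ⟨x - P x, x, rfl⟩, by simp, hCP x hx, C.sub_mem hx (hCP x hx)⟩

theorem forall_mem_apply_mem_iff_of_blocks (hCP : ∀ x ∈ C, P x ∈ C)
    {X : Ran P →L[R] Ran (1 - P)} {Z : Ran (1 - P) →L[R] Ran P} {Y : M →L[R] M}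
    (hY : ∀ (f : Ran P) (g : Ran (1 - P)), Y (f + g) = -(Z g : M) + X f) :
    (∀ x ∈ C, Y x ∈ C) ↔
      (∀ f : Ran P, (f : M) ∈ C → (X f : M) ∈ C) ∧
        ∀ g : Ran (1 - P), (g : M) ∈ C → (Z g : M) ∈ C := by
  constructor
  · intro h
    refine ⟨fun f hf => ?_, fun g hg => ?_⟩
    · have hYf := h ((f : M) + ((0 : Ran (1 - P)) : M)) (by simpa using hf)
      rw [hY, map_zero] at hYf
      simpa using hYf
    · have hYg := h (((0 : Ran P) : M) + g) (by simpa using hg)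
      rw [hY, map_zero] at hYg
      simpa using C.neg_mem hYg
  · rintro ⟨hX, hZ⟩ x hx
    obtain ⟨f, g, rfl, hf, hg⟩ := exists_add_of_mem hCP hx
    rw [hY]
    exact C.add_mem (C.neg_mem (hZ g hg)) (hX f hf)

end Blocks

section GraphInvariant

variable {𝕜 H : Type*} [RCLike 𝕜] [NormedAddCommGroup H] [InnerProductSpace 𝕜 H]
  [CompleteSpace H] {P Q : H →L[𝕜] H}

local notation "Ran " T:max => LinearMap.range ((T : H →L[𝕜] H) : H →ₗ[𝕜] H)

theorem IsStarProjection.isOrtho_range_range_one_sub (hP : IsStarProjection P) :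
    Ran P ⟂ Ran (1 - P) := by
  rw [Submodule.isOrtho_iff_inner_eq]
  rintro _ ⟨a, rfl⟩ _ ⟨b, rfl⟩
  calc ⟪P a, (1 - P) b⟫_𝕜 = ⟪a, P ((1 - P) b)⟫_𝕜 := hP.isSelfAdjoint.isSymmetric a _
    _ = 0 := by rw [← mul_apply_eq_comp, hP.mul_one_sub_self, zero_apply, inner_zero_right]

variable [CompleteSpace (LinearMap.range (P : H →ₗ[𝕜] H))]
  [CompleteSpace (LinearMap.range ((1 - P : H →L[𝕜] H) : H →ₗ[𝕜] H))]
  {X : LinearMap.range (P : H →ₗ[𝕜] H) →L[𝕜] LinearMap.range ((1 - P : H →L[𝕜] H) : H →ₗ[𝕜] H)}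
  {C : Submodule 𝕜 H}

theorem mem_and_mem_of_graph (hP : IsStarProjection P) (hQ : IsStarProjection Q)
    (hgraph : (Ran Q : Set H) = {h | ∃ f : Ran P, h = (f : H) + (X f : H)})
    (hCP : ∀ x ∈ C, P x ∈ C) (hCQ : ∀ x ∈ C, Q x ∈ C) {f k : Ran P} {g : Ran (1 - P)}
    (hfg : (f : H) + g ∈ C) (hk : (1 + X.adjoint ∘L X) k = f + X.adjoint g) :
    (k : H) ∈ C ∧ (X k : H) ∈ C := by
  have hQfg := hCQ _ hfg
  rw [hQ.apply_add_eq_of_range_eq_graph hP.isOrtho_range_range_one_sub hgraph hk] at hQfg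
  exact hP.isIdempotentElem.mem_and_mem_of_add_mem hCP hQfg

theorem exists_mem_and_mem_of_graph (hP : IsStarProjection P) (hQ : IsStarProjection Q)
    (hgraph : (Ran Q : Set H) = {h | ∃ f : Ran P, h = (f : H) + (X f : H)})
    (hCP : ∀ x ∈ C, P x ∈ C) (hCQ : ∀ x ∈ C, Q x ∈ C) {f : Ran P} {g : Ran (1 - P)}
    (hfg : (f : H) + g ∈ C) :
    ∃ k : Ran P, (1 + X.adjoint ∘L X) k = f + X.adjoint g ∧ (k : H) ∈ C ∧ (X k : H) ∈ C := by
  obtain ⟨k, -, hk⟩ :=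
    hQ.exists_apply_add_eq_of_range_eq_graph hP.isOrtho_range_range_one_sub hgraph f g
  exact ⟨k, hk, mem_and_mem_of_graph hP hQ hgraph hCP hCQ hfg hk⟩

theorem forall_mem_one_add_adjoint_comp_self_mem_iff (hP : IsStarProjection P)
    (hQ : IsStarProjection Q)
    (hgraph : (Ran Q : Set H) = {h | ∃ f : Ran P, h = (f : H) + (X f : H)})
    (hCP : ∀ x ∈ C, P x ∈ C) (hCQ : ∀ x ∈ C, Q x ∈ C) :
    (∀ f : Ran P, (f : H) ∈ C → ((1 + X.adjoint ∘L X) f : H) ∈ C) ↔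
      (∀ f : Ran P, (f : H) ∈ C → (X f : H) ∈ C) ∧
        ∀ g : Ran (1 - P), (g : H) ∈ C → (X.adjoint g : H) ∈ C := by
  constructor
  · intro h
    refine ⟨fun f hf => ?_, fun g hg => ?_⟩
    · refine (mem_and_mem_of_graph (g := 0) (k := f) hP hQ hgraph hCP hCQ ?_
        (by rw [map_zero, add_zero])).2
      rw [Submodule.coe_zero, add_zero]
      exact h f hf
    · obtain ⟨k, hk, hkC, -⟩ := exists_mem_and_mem_of_graph (f := 0) hP hQ hgraph hCP hCQ
        (by simpa using hg)
      rw [zero_add] at hk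
      exact hk ▸ h k hkC
  · rintro ⟨hX, hX'⟩ f hf
    rw [X.one_add_adjoint_comp_self_apply, Submodule.coe_add]
    exact C.add_mem hf (hX' _ (hX f hf))

theorem forall_mem_one_add_comp_adjoint_mem_iff (hP : IsStarProjection P)
    (hQ : IsStarProjection Q)
    (hgraph : (Ran Q : Set H) = {h | ∃ f : Ran P, h = (f : H) + (X f : H)})
    (hCP : ∀ x ∈ C, P x ∈ C) (hCQ : ∀ x ∈ C, Q x ∈ C) :
    (∀ g : Ran (1 - P), (g : H) ∈ C → ((1 + X ∘L X.adjoint) g : H) ∈ C) ↔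
      (∀ f : Ran P, (f : H) ∈ C → (X f : H) ∈ C) ∧
        ∀ g : Ran (1 - P), (g : H) ∈ C → (X.adjoint g : H) ∈ C := by
  constructor
  · intro h
    refine ⟨fun f hf => ?_, fun g hg => ?_⟩
    · obtain ⟨k, hk, -, hXk⟩ := exists_mem_and_mem_of_graph (g := 0) hP hQ hgraph hCP hCQ
        (by simpa using hf)
      have hBXk : (1 + X ∘L X.adjoint) (X k) = X f := by
        rw [← comp_apply, ← X.comp_one_add_adjoint_comp_self, comp_apply, hk, map_zero, add_zero]
      exact hBXk ▸ h _ hXk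
    · refine (mem_and_mem_of_graph (f := 0) (k := X.adjoint g) hP hQ hgraph hCP hCQ
        (by rw [Submodule.coe_zero, zero_add]; exact h g hg) ?_).1
      rw [← comp_apply, ← X.adjoint_comp_one_add_comp_adjoint, zero_add, comp_apply]
  · rintro ⟨hX, hX'⟩ g hg
    rw [X.one_add_comp_adjoint_apply, Submodule.coe_add]
    exact C.add_mem hg (hX _ (hX' g hg))

end GraphInvariant

theorem stmt7_general
    {H : Type*} [NormedAddCommGroup H] [InnerProductSpace ℂ H] [CompleteSpace H]
    (P Q : H →L[ℂ] H)
    (hPproj : IsIdempotentElem P) (hPsa : IsSelfAdjoint P)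
    (hQproj : IsIdempotentElem Q) (hQsa : IsSelfAdjoint Q)
    [CompleteSpace (LinearMap.range (P : H →ₗ[ℂ] H))] [CompleteSpace (LinearMap.range ((1 - P : H →L[ℂ] H) : H →ₗ[ℂ] H))]
    (X : LinearMap.range (P : H →ₗ[ℂ] H) →L[ℂ] LinearMap.range ((1 - P : H →L[ℂ] H) : H →ₗ[ℂ] H))
    (hgraph : (LinearMap.range (Q : H →ₗ[ℂ] H) : Set H) =
      {h : H | ∃ f : LinearMap.range (P : H →ₗ[ℂ] H), h = (f : H) + (X f : H)})
    (Y : H →L[ℂ] H)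
    (hY : ∀ (f : LinearMap.range (P : H →ₗ[ℂ] H)) (g : LinearMap.range ((1 - P : H →L[ℂ] H) : H →ₗ[ℂ] H)),
      Y ((f : H) + (g : H)) = -((X.adjoint g : H)) + ((X f : H)))
    (C : Submodule ℂ H)
    (hCP : ∀ x ∈ C, P x ∈ C) (hCQ : ∀ x ∈ C, Q x ∈ C) :
    List.TFAE
      [ ∀ f : LinearMap.range (P : H →ₗ[ℂ] H), (f : H) ∈ C → (((1 + X.adjoint ∘L X) f : H)) ∈ C,
        ∀ g : LinearMap.range ((1 - P : H →L[ℂ] H) : H →ₗ[ℂ] H), (g : H) ∈ C → (((1 + X ∘L X.adjoint) g : H)) ∈ C,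
        ∀ x ∈ C, Y x ∈ C,
        ∀ x ∈ C, ((1 : H →L[ℂ] H) + Y) x ∈ C,
        ∀ x ∈ C, ((1 : H →L[ℂ] H) - Y) x ∈ C ] := by
  have hP : IsStarProjection P := ⟨hPproj, hPsa⟩
  have hQ : IsStarProjection Q := ⟨hQproj, hQsa⟩
  have hYC := forall_mem_apply_mem_iff_of_blocks hCP hY
  tfae_have 1 ↔ 3 :=
    (forall_mem_one_add_adjoint_comp_self_mem_iff hP hQ hgraph hCP hCQ).trans hYC.symm
  tfae_have 2 ↔ 3 := (forall_mem_one_add_comp_adjoint_mem_iff hP hQ hgraph hCP hCQ).trans hYC.symm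
  tfae_have 3 ↔ 4 := forall₂_congr fun x hx => by
    rw [add_apply, one_apply_eq_self, C.add_mem_iff_right hx]
  tfae_have 3 ↔ 5 := forall₂_congr fun x hx => by
    rw [sub_apply, one_apply_eq_self, C.sub_mem_iff_right hx]
  tfae_finish

/-- Let `P` and `Q` be orthogonal projections with `‖P − Q‖ < 1`, `X : Ran P → Ran P⊥` the bounded
operator with `Ran Q = {f ⊕ Xf : f ∈ Ran P}`, and `Y = [[0, −X*],[X, 0]]` (blockwise with
respect to `Ran P ⊕ Ran P⊥`, `P⊥ = 1 − P`).  Let `𝒞` be a subspace invariant under both `P`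
and `Q` with `𝒞 = (𝒞 ∩ Ran P) ⊕ (𝒞 ∩ Ran P⊥)` (equivalently, `P 𝒞 ⊆ 𝒞`).  Then the following
are equivalent:
(i) `I + X*X` maps `𝒞₊ := 𝒞 ∩ Ran P` into itself;
(ii) `I + XX*` maps `𝒞₋ := 𝒞 ∩ Ran P⊥` into itself;
(iii) `Y` maps `𝒞` into itself;
(iv) `I + Y` maps `𝒞` into itself;
(v) `I − Y` maps `𝒞` into itself. -/
theorem stmt7
    {H : Type*} [NormedAddCommGroup H] [InnerProductSpace ℂ H] [CompleteSpace H]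
    (P Q : H →L[ℂ] H)
    (hPproj : IsIdempotentElem P) (hPsa : IsSelfAdjoint P)
    (hQproj : IsIdempotentElem Q) (hQsa : IsSelfAdjoint Q)
    (hPQ : ‖P - Q‖ < 1)
    [CompleteSpace (LinearMap.range (P : H →ₗ[ℂ] H))] [CompleteSpace (LinearMap.range ((1 - P : H →L[ℂ] H) : H →ₗ[ℂ] H))]
    (X : LinearMap.range (P : H →ₗ[ℂ] H) →L[ℂ] LinearMap.range ((1 - P : H →L[ℂ] H) : H →ₗ[ℂ] H))
    (hgraph : (LinearMap.range (Q : H →ₗ[ℂ] H) : Set H) =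
      {h : H | ∃ f : LinearMap.range (P : H →ₗ[ℂ] H), h = (f : H) + (X f : H)})
    (Y : H →L[ℂ] H)
    (hY : ∀ (f : LinearMap.range (P : H →ₗ[ℂ] H)) (g : LinearMap.range ((1 - P : H →L[ℂ] H) : H →ₗ[ℂ] H)),
      Y ((f : H) + (g : H)) = -((X.adjoint g : H)) + ((X f : H)))
    (C : Submodule ℂ H)
    (hCP : ∀ x ∈ C, P x ∈ C) (hCQ : ∀ x ∈ C, Q x ∈ C) :
    List.TFAE
      [ ∀ f : LinearMap.range (P : H →ₗ[ℂ] H), (f : H) ∈ C → (((1 + X.adjoint ∘L X) f : H)) ∈ C,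
        ∀ g : LinearMap.range ((1 - P : H →L[ℂ] H) : H →ₗ[ℂ] H), (g : H) ∈ C → (((1 + X ∘L X.adjoint) g : H)) ∈ C,
        ∀ x ∈ C, Y x ∈ C,
        ∀ x ∈ C, ((1 : H →L[ℂ] H) + Y) x ∈ C,
        ∀ x ∈ C, ((1 : H →L[ℂ] H) - Y) x ∈ C ] :=
  stmt7_general P Q hPproj hPsa hQproj hQsa X hgraph Y hY C hCP hCQ
end

section
/- Let A be self-adjoint with spectral projections P± (for (0,∞) and (−∞,0]) and let V be a symmetric A-bounded operator that is infinitesimal with respect to A. Set B = A + V with spectral projections Q± and K := (P₊Q₋V − P₊VQ₋)|_{Ran P₊}, Λ := A|_{Ran P₊}. Then for every b ∈ (0,1) and a ≥ 0 with ‖Vx‖ ≤ a‖x‖ + b‖Ax‖ on Dom(A) one has ‖Kx‖ ≤ a(‖P₊Q₋‖ + (1+b)/(1−b))‖x‖ + b(‖P₊Q₋‖ + (1+b)/(1−b))‖Λx‖ for all x ∈ Dom(Λ); consequently K is Λ-bounded with Λ-bound 0. -/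
open scoped InnerProductSpace
open Filter Topology

/-
Write `B = A + V`, `y = Q₋x`, and let `‖Vz‖ ≤ a‖z‖ + b‖Az‖` with `b < 1`. Since `Q₋` commutes with
`B` and is a contraction, `‖By‖ ≤ ‖Bx‖` and `‖y‖ ≤ ‖x‖`; as `‖Az‖` and `‖Bz‖` are comparable up to
the relative bound, this gives `(1 - b)‖Ay‖ ≤ 2a‖x‖ + (1 + b)‖Ax‖`. Bounding the two terms of `K`
by `‖P₊Q₋‖ ‖Vx‖` and `‖Vy‖` yields the estimate. Letting `b → 0` the factor
`b (‖P₊Q₋‖ + (1 + b)/(1 - b))` tends to `0`, so infinitesimal `A`-boundedness of `V` makes `K`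
infinitesimally `Λ`-bounded.
-/

section RelativeBound

variable {X F : Type*} [SeminormedAddCommGroup X] [SeminormedAddCommGroup F]

def IsRelBoundedWith (A V : X → F) (a b : ℝ) : Prop :=
  ∀ x, ‖V x‖ ≤ a * ‖x‖ + b * ‖A x‖

variable {A V : X → F} {a b : ℝ}

theorem IsRelBoundedWith.one_sub_mul_norm_le (hV : IsRelBoundedWith A V a b) (ha : 0 ≤ a)
    {x y : X} (hy : ‖y‖ ≤ ‖x‖) (hB : ‖A y + V y‖ ≤ ‖A x + V x‖) :
    (1 - b) * ‖A y‖ ≤ 2 * a * ‖x‖ + (1 + b) * ‖A x‖ := by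
  have hAy : ‖A y‖ ≤ ‖A x‖ + ‖V x‖ + ‖V y‖ :=
    calc ‖A y‖ = ‖(A y + V y) - V y‖ := by rw [add_sub_cancel_right]
      _ ≤ ‖A y + V y‖ + ‖V y‖ := norm_sub_le _ _
      _ ≤ ‖A x + V x‖ + ‖V y‖ := by gcongr
      _ ≤ ‖A x‖ + ‖V x‖ + ‖V y‖ := by gcongr; exact norm_add_le _ _
  nlinarith [hV x, hV y, mul_le_mul_of_nonneg_left hy ha]

theorem IsRelBoundedWith.norm_apply_sub_apply_le
    {𝕜 : Type*} [NontriviallyNormedField 𝕜] [NormedSpace 𝕜 F]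
    (hV : IsRelBoundedWith A V a b) (ha : 0 ≤ a) (hb : 0 ≤ b) (hb1 : b < 1)
    (P Q : F →L[𝕜] F) (hP : ‖P‖ ≤ 1) {x y : X} (hy : ‖y‖ ≤ ‖x‖)
    (hB : ‖A y + V y‖ ≤ ‖A x + V x‖) :
    ‖P (Q (V x)) - P (V y)‖ ≤
      a * (‖P ∘L Q‖ + (1 + b) / (1 - b)) * ‖x‖ + b * (‖P ∘L Q‖ + (1 + b) / (1 - b)) * ‖A x‖ := by
  have hPQ : ‖P (Q (V x))‖ ≤ ‖P ∘L Q‖ * (a * ‖x‖ + b * ‖A x‖) :=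
    ((P ∘L Q).le_opNorm (V x)).trans (by gcongr; exact hV x)
  have hPV : ‖P (V y)‖ ≤ a * ‖x‖ + b * ‖A y‖ :=
    calc ‖P (V y)‖ ≤ ‖V y‖ := P.le_of_opNorm_le hP _ |>.trans_eq (one_mul _)
      _ ≤ a * ‖y‖ + b * ‖A y‖ := hV y
      _ ≤ a * ‖x‖ + b * ‖A y‖ := by gcongr
  have hbAy : b * ‖A y‖ ≤ a * ((1 + b) / (1 - b) - 1) * ‖x‖ + b * (1 + b) / (1 - b) * ‖A x‖ := by
    have h1b : 0 < 1 - b := by linarith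
    have := hV.one_sub_mul_norm_le ha hy hB
    rw [← mul_le_mul_iff_of_pos_left h1b]
    field_simp
    nlinarith
  calc ‖P (Q (V x)) - P (V y)‖ ≤ ‖P (Q (V x))‖ + ‖P (V y)‖ := norm_sub_le _ _
    _ ≤ _ := by linear_combination hPQ + hPV + hbAy

end RelativeBound

theorem exists_mul_add_one_add_div_one_sub_le (c : ℝ) {β : ℝ} (hβ : 0 < β) :
    ∃ b : ℝ, 0 < b ∧ b < 1 ∧ b * (c + (1 + b) / (1 - b)) ≤ β := by
  have hf : ContinuousAt (fun b : ℝ => b * (c + (1 + b) / (1 - b))) 0 := by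
    fun_prop (disch := norm_num)
  have hsmall : ∀ᶠ b in 𝓝[>] (0 : ℝ), b * (c + (1 + b) / (1 - b)) < β :=
    nhdsWithin_le_nhds (hf.eventually (gt_mem_nhds (by simpa using hβ)))
  have hunit : ∀ᶠ b in 𝓝[>] (0 : ℝ), b ∈ Set.Ioo 0 1 := Ioo_mem_nhdsGT one_pos
  obtain ⟨b, ⟨hb0, hb1⟩, hbβ⟩ := (hunit.and hsmall).exists
  exact ⟨b, hb0, hb1, hbβ.le⟩

theorem stmt10_general
    {H : Type*} [NormedAddCommGroup H] [InnerProductSpace ℂ H] [CompleteSpace H]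
    (DA : Submodule ℂ H) (A V : DA →ₗ[ℂ] H)
    -- `V` is infinitesimally `A`-bounded:
    (hVinf : ∀ b : ℝ, 0 < b → ∃ a : ℝ, 0 ≤ a ∧
      ∀ x : DA, ‖V x‖ ≤ a * ‖(x : H)‖ + b * ‖A x‖)
    (P : H →L[ℂ] H) (hPproj : IsIdempotentElem P) (hPsa : IsSelfAdjoint P)
    (Qm : H →L[ℂ] H) (hQproj : IsIdempotentElem Qm) (hQsa : IsSelfAdjoint Qm)
    (hQdom : ∀ x : H, x ∈ DA → Qm x ∈ DA)
    -- `Q₋` commutes with `B = A + V`: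
    (hQB : ∀ x : DA, A ⟨Qm (x : H), hQdom _ x.2⟩ + V ⟨Qm (x : H), hQdom _ x.2⟩ =
      Qm (A x + V x)) :
    (∀ a b : ℝ, 0 ≤ a → 0 < b → b < 1 →
      (∀ x : DA, ‖V x‖ ≤ a * ‖(x : H)‖ + b * ‖A x‖) →
      ∀ x : DA, (x : H) ∈ LinearMap.range (P : H →ₗ[ℂ] H) →
        ‖P (Qm (V x)) - P (V ⟨Qm (x : H), hQdom _ x.2⟩)‖ ≤
          a * (‖P ∘L Qm‖ + (1 + b) / (1 - b)) * ‖(x : H)‖ +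
            b * (‖P ∘L Qm‖ + (1 + b) / (1 - b)) * ‖A x‖) ∧
    ∀ β : ℝ, 0 < β → ∃ α : ℝ, 0 ≤ α ∧
      ∀ x : DA, (x : H) ∈ LinearMap.range (P : H →ₗ[ℂ] H) →
        ‖P (Qm (V x)) - P (V ⟨Qm (x : H), hQdom _ x.2⟩)‖ ≤
          α * ‖(x : H)‖ + β * ‖A x‖ := by
  have hP : ‖P‖ ≤ 1 := IsStarProjection.norm_le P ⟨hPproj, hPsa⟩
  have hQ (z : H) : ‖Qm z‖ ≤ ‖z‖ := by
    simpa using Qm.le_of_opNorm_le (IsStarProjection.norm_le Qm ⟨hQproj, hQsa⟩) z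
  have hK := fun a b (ha : 0 ≤ a) (hb : 0 < b) (hb1 : b < 1)
      (hV : IsRelBoundedWith (fun x : DA => A x) (fun x : DA => V x) a b) (x : DA)
      (_ : (x : H) ∈ LinearMap.range (P : H →ₗ[ℂ] H)) =>
    hV.norm_apply_sub_apply_le ha hb.le hb1 P Qm hP (y := ⟨Qm x, hQdom _ x.2⟩) (hQ x)
      (by rw [hQB]; exact hQ _)
  refine ⟨hK, fun β hβ => ?_⟩
  obtain ⟨b, hb, hb1, hbβ⟩ := exists_mul_add_one_add_div_one_sub_le ‖P ∘L Qm‖ hβ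
  obtain ⟨a, ha, hV⟩ := hVinf b hb
  have hd : 0 ≤ (1 + b) / (1 - b) := div_nonneg (by linarith) (by linarith)
  refine ⟨a * (‖P ∘L Qm‖ + (1 + b) / (1 - b)), by positivity, fun x hx => ?_⟩
  exact (hK a b ha hb hb1 hV x hx).trans (by gcongr; exact le_rfl)

/-- Let `A` be self-adjoint (modelled as a symmetric linear map on its domain `DA`) with spectral
projections `P₊ = E_A((0,∞))` and `P₋ = 1 − P₊`, and let `V` be a symmetric operator that is
infinitesimally `A`-bounded.  Set `B = A + V` (self-adjoint by Kato–Rellich) with spectral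
projection `Q₋ = E_B((−∞,0])`, which commutes with `B` and maps `Dom(A)` into itself, and put
`K := (P₊Q₋V − P₊VQ₋)|_{Ran P₊}` and `Λ := A|_{Ran P₊}`.  Then for every `b ∈ (0,1)` and
`a ≥ 0` with `‖Vx‖ ≤ a‖x‖ + b‖Ax‖` on `Dom(A)` one has
`‖Kx‖ ≤ a(‖P₊Q₋‖ + (1+b)/(1−b))‖x‖ + b(‖P₊Q₋‖ + (1+b)/(1−b))‖Λx‖` for all `x ∈ Dom(Λ)`;
consequently `K` is `Λ`-bounded with `Λ`-bound `0`. -/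
theorem stmt10
    {H : Type*} [NormedAddCommGroup H] [InnerProductSpace ℂ H] [CompleteSpace H]
    (DA : Submodule ℂ H) (A V : DA →ₗ[ℂ] H)
    (hAsymm : ∀ x y : DA, ⟪A x, (y : H)⟫_ℂ = ⟪(x : H), A y⟫_ℂ)
    (hVsymm : ∀ x y : DA, ⟪V x, (y : H)⟫_ℂ = ⟪(x : H), V y⟫_ℂ)
    -- `V` is infinitesimally `A`-bounded:
    (hVinf : ∀ b : ℝ, 0 < b → ∃ a : ℝ, 0 ≤ a ∧
      ∀ x : DA, ‖V x‖ ≤ a * ‖(x : H)‖ + b * ‖A x‖)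
    (P : H →L[ℂ] H) (hPproj : IsIdempotentElem P) (hPsa : IsSelfAdjoint P)
    (hPdom : ∀ x : H, x ∈ DA → P x ∈ DA)
    (hPA : ∀ x : DA, A ⟨P (x : H), hPdom _ x.2⟩ = P (A x))
    -- `P` is the spectral projection of `A` for `(0,∞)`:
    (hApos : ∀ x : DA, (x : H) ∈ LinearMap.range (P : H →ₗ[ℂ] H) → x ≠ 0 → 0 < (⟪(x : H), A x⟫_ℂ).re)
    (hAnonpos : ∀ x : DA, (x : H) ∈ LinearMap.range (((1 : H →L[ℂ] H) - P : H →L[ℂ] H) : H →ₗ[ℂ] H) →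
      (⟪(x : H), A x⟫_ℂ).re ≤ 0)
    (Qm : H →L[ℂ] H) (hQproj : IsIdempotentElem Qm) (hQsa : IsSelfAdjoint Qm)
    (hQdom : ∀ x : H, x ∈ DA → Qm x ∈ DA)
    -- `Q₋` commutes with `B = A + V`:
    (hQB : ∀ x : DA, A ⟨Qm (x : H), hQdom _ x.2⟩ + V ⟨Qm (x : H), hQdom _ x.2⟩ =
      Qm (A x + V x))
    -- `Q₋` is the spectral projection of `B = A + V` for `(−∞,0]`:
    (hBnonpos : ∀ x : DA, (x : H) ∈ LinearMap.range (Qm : H →ₗ[ℂ] H) →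
      (⟪(x : H), A x + V x⟫_ℂ).re ≤ 0)
    (hBpos : ∀ x : DA, (x : H) ∈ LinearMap.range (((1 : H →L[ℂ] H) - Qm : H →L[ℂ] H) : H →ₗ[ℂ] H) → x ≠ 0 →
      0 < (⟪(x : H), A x + V x⟫_ℂ).re) :
    (∀ a b : ℝ, 0 ≤ a → 0 < b → b < 1 →
      (∀ x : DA, ‖V x‖ ≤ a * ‖(x : H)‖ + b * ‖A x‖) →
      ∀ x : DA, (x : H) ∈ LinearMap.range (P : H →ₗ[ℂ] H) →
        ‖P (Qm (V x)) - P (V ⟨Qm (x : H), hQdom _ x.2⟩)‖ ≤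
          a * (‖P ∘L Qm‖ + (1 + b) / (1 - b)) * ‖(x : H)‖ +
            b * (‖P ∘L Qm‖ + (1 + b) / (1 - b)) * ‖A x‖) ∧
    ∀ β : ℝ, 0 < β → ∃ α : ℝ, 0 ≤ α ∧
      ∀ x : DA, (x : H) ∈ LinearMap.range (P : H →ₗ[ℂ] H) →
        ‖P (Qm (V x)) - P (V ⟨Qm (x : H), hQdom _ x.2⟩)‖ ≤
          α * ‖(x : H)‖ + β * ‖A x‖ :=
  stmt10_general DA A V hVinf P hPproj hPsa Qm hQproj hQsa hQdom hQB
end
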